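/- Let Λ be a finite simple graph and let A, B be sets of vertices. Then the relation ≤ on Mincut_Λ(A,B) is a partial order, and (Mincut_Λ(A,B), ≤) is a lattice: any Φ₁, Φ₂ ∈ Mincut_Λ(A,B) have a join (least upper bound) and a meet (greatest lower bound) in Mincut_Λ(A,B). Moreover, both the join and the meet of Φ₁ and Φ₂ are contained in Φ₁ ∪ Φ₂. -/

import Mathlib

universe u

/-- `C` separates `A` from `B` in the graph `G`: every vertex of `A \ C` and every vertex of
`B \ C` lie in different connected components of the subgraph induced on the complement of `C`. -/
def Separates {V : Type u} (G : SimpleGraph V) (A B C : Set V) : Prop :=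
  ∀ x (hx : x ∈ A \ C) y (hy : y ∈ B \ C),
    ¬ (G.induce Cᶜ).Reachable ⟨x, hx.2⟩ ⟨y, hy.2⟩

/-- `C` is a minimal cut between `A` and `B`: it separates `A` from `B` and no proper subset
of `C` does. -/
def IsMincutBetween {V : Type u} (G : SimpleGraph V) (A B C : Set V) : Prop :=
  Separates G A B C ∧ ∀ C' ⊆ C, C' ≠ C → ¬ Separates G A B C'

/-- The collection of all minimal cuts between `A` and `B` in `G`. -/
def Mincut {V : Type u} (G : SimpleGraph V) (A B : Set V) : Set (Set V) :=
  {C | IsMincutBetween G A B C}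

/-- `Φ^A`: the union of those connected components of the induced subgraph on the complement of
`Φ` that contain at least one vertex of `A \ Φ`. -/
def sideOf {V : Type u} (G : SimpleGraph V) (A Φ : Set V) : Set V :=
  {v | ∃ (hv : v ∉ Φ), ∃ x, ∃ (hx : x ∈ A \ Φ),
    (G.induce Φᶜ).Reachable ⟨v, hv⟩ ⟨x, hx.2⟩}

/-! For minimal cuts, `Φ^A ⊆ Θ^A` holds iff `Φ ⊆ Θ ∪ Θ^A` iff `Θ^B ⊆ Φ^B`: every vertex of a
minimal cut lies in `A` or has a neighbour on its `A`-side, and likewise for `B`. The join of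
`Φ₁` and `Φ₂` is a minimal cut inside `(Φ₁ ∪ Φ₂) \ (Φ₁^A ∪ Φ₂^A)`, the outer boundary of
`Φ₁^A ∪ Φ₂^A`, which separates `A` from `B` and misses both `A`-sides. Exchanging `A` and `B`
reverses the order, so the meet is the join for the pair `(B, A)`. -/

namespace SimpleGraph

variable {V : Type u} {G : SimpleGraph V} {Φ : Set V} {u v w : V}

def ReachableOutside (G : SimpleGraph V) (Φ : Set V) (u v : V) : Prop :=
  ∃ (hu : u ∉ Φ) (hv : v ∉ Φ), (G.induce Φᶜ).Reachable ⟨u, hu⟩ ⟨v, hv⟩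

namespace ReachableOutside

lemma notMem_right (h : G.ReachableOutside Φ u v) : v ∉ Φ := h.2.1

lemma refl (hu : u ∉ Φ) : G.ReachableOutside Φ u u := ⟨hu, hu, .rfl⟩

lemma symm (h : G.ReachableOutside Φ u v) : G.ReachableOutside Φ v u :=
  let ⟨hu, hv, h⟩ := h; ⟨hv, hu, h.symm⟩

lemma trans (h₁ : G.ReachableOutside Φ u v) (h₂ : G.ReachableOutside Φ v w) :
    G.ReachableOutside Φ u w :=
  let ⟨hu, _, h₁⟩ := h₁; let ⟨_, hw, h₂⟩ := h₂; ⟨hu, hw, h₁.trans h₂⟩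

lemma of_adj (hu : u ∉ Φ) (hv : v ∉ Φ) (h : G.Adj u v) : G.ReachableOutside Φ u v :=
  ⟨hu, hv, Adj.reachable (G := G.induce Φᶜ) (u := ⟨u, hu⟩) (v := ⟨v, hv⟩) h⟩

lemma mem_of_adj_closed (h : G.ReachableOutside Φ u v) {X : Set V} (hu : u ∈ X)
    (hX : ∀ x ∈ X, ∀ y, G.Adj x y → y ∉ Φ → y ∈ X) : v ∈ X := by
  obtain ⟨_, _, ⟨p⟩⟩ := h
  suffices ∀ {x y : ↥Φᶜ}, (G.induce Φᶜ).Walk x y → x.1 ∈ X → y.1 ∈ X from this p hu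
  intro x y p
  induction p with
  | nil => exact id
  | @cons _ y _ hadj _ ih => exact fun hx => ih (hX _ hx _ hadj y.2)

end ReachableOutside

end SimpleGraph

open SimpleGraph

variable {V : Type u} {G : SimpleGraph V} {A B C Φ Φ₁ Φ₂ Θ : Set V} {a u v : V}

lemma mem_sideOf_iff : v ∈ sideOf G A Φ ↔ ∃ a ∈ A, G.ReachableOutside Φ v a :=
  ⟨fun ⟨hv, a, ha, h⟩ => ⟨a, ha.1, hv, ha.2, h⟩, fun ⟨a, ha, hv, ha', h⟩ => ⟨hv, a, ⟨ha, ha'⟩, h⟩⟩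

lemma notMem_of_mem_sideOf (hv : v ∈ sideOf G A Φ) : v ∉ Φ := hv.1

lemma disjoint_self_sideOf : Disjoint Φ (sideOf G A Φ) :=
  Set.disjoint_left.2 fun _ hv hv' => notMem_of_mem_sideOf hv' hv

lemma mem_sideOf_of_mem (ha : a ∈ A) (ha' : a ∉ Φ) : a ∈ sideOf G A Φ :=
  mem_sideOf_iff.2 ⟨a, ha, .refl ha'⟩

lemma mem_sideOf_of_reachableOutside (h : G.ReachableOutside Φ u v) (hv : v ∈ sideOf G A Φ) :
    u ∈ sideOf G A Φ :=
  let ⟨a, ha, hva⟩ := mem_sideOf_iff.1 hv; mem_sideOf_iff.2 ⟨a, ha, h.trans hva⟩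

lemma mem_sideOf_of_adj (hu : u ∉ Φ) (hadj : G.Adj u v) (hv : v ∈ sideOf G A Φ) :
    u ∈ sideOf G A Φ :=
  mem_sideOf_of_reachableOutside (.of_adj hu (notMem_of_mem_sideOf hv) hadj) hv

lemma sideOf_subset_of_adj_closed {X : Set V} (hA : A \ C ⊆ X)
    (hX : ∀ x ∈ X, ∀ y, G.Adj x y → y ∉ C → y ∈ X) : sideOf G A C ⊆ X := by
  intro v hv
  obtain ⟨a, ha, hva⟩ := mem_sideOf_iff.1 hv
  exact hva.symm.mem_of_adj_closed (hA ⟨ha, hva.notMem_right⟩) hX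

lemma sideOf_subset_sideOf_of_disjoint (h : Disjoint Θ (sideOf G A Φ)) :
    sideOf G A Φ ⊆ sideOf G A Θ := by
  refine fun v hv => (sideOf_subset_of_adj_closed (X := sideOf G A Θ ∩ sideOf G A Φ)
    (fun a ha => ?_) (fun x hx y hadj hy => ?_) hv).1
  · have haΦ : a ∈ sideOf G A Φ := mem_sideOf_of_mem ha.1 ha.2
    exact ⟨mem_sideOf_of_mem ha.1 (Set.disjoint_right.1 h haΦ), haΦ⟩
  · have hyΦ : y ∈ sideOf G A Φ := mem_sideOf_of_adj hy hadj.symm hx.2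
    exact ⟨mem_sideOf_of_adj (Set.disjoint_right.1 h hyΦ) hadj.symm hx.1, hyΦ⟩

lemma separates_iff : Separates G A B C ↔ ∀ x ∈ A, ∀ y ∈ B, ¬ G.ReachableOutside C x y :=
  ⟨fun h x hx y hy ⟨hxC, hyC, hr⟩ => h x ⟨hx, hxC⟩ y ⟨hy, hyC⟩ hr,
    fun h x hx y hy hr => h x hx.1 y hy.1 ⟨hx.2, hy.2, hr⟩⟩

lemma separates_iff_disjoint_sideOf : Separates G A B C ↔ Disjoint (sideOf G A C) B := by
  rw [separates_iff, Set.disjoint_right]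
  refine ⟨fun h y hy hyA => ?_, fun h x hx y hy hxy => h hy ?_⟩
  · obtain ⟨x, hx, hyx⟩ := mem_sideOf_iff.1 hyA
    exact h x hx y hy hyx.symm
  · exact mem_sideOf_iff.2 ⟨x, hx, hxy.symm⟩

lemma Separates.symm (h : Separates G A B C) : Separates G B A C :=
  separates_iff.2 fun x hx y hy hxy => separates_iff.1 h y hy x hx hxy.symm

lemma Separates.disjoint_sideOf (h : Separates G A B C) :
    Disjoint (sideOf G A C) (sideOf G B C) :=
  Set.disjoint_left.2 fun _ hA hB =>
    let ⟨_, hb, hvb⟩ := mem_sideOf_iff.1 hB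
    Set.disjoint_right.1 (separates_iff_disjoint_sideOf.1 h) hb
      (mem_sideOf_of_reachableOutside hvb.symm hA)

lemma IsMincutBetween.symm (h : IsMincutBetween G A B Φ) : IsMincutBetween G B A Φ :=
  ⟨h.1.symm, fun Φ' hΦ' hne hsep => h.2 Φ' hΦ' hne hsep.symm⟩

lemma mincut_comm : Mincut G A B = Mincut G B A :=
  Set.ext fun _ => ⟨IsMincutBetween.symm, IsMincutBetween.symm⟩

lemma exists_isMincutBetween_subset [Finite V] (h : Separates G A B C) :
    ∃ Φ ⊆ C, IsMincutBetween G A B Φ := by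
  obtain ⟨Φ, hΦC, hsep, hmin⟩ := exists_minimal_le_of_wellFoundedLT (Separates G A B) C h
  exact ⟨Φ, hΦC, hsep, fun Φ' hΦ' hne hsep' => hne (hΦ'.antisymm (hmin hsep' hΦ'))⟩

/-- Removing `u` from a minimal cut `Φ` must reconnect `A` to `B`, which forces `u` to touch the
`A`-side of `Φ` unless `u ∈ A`. -/
lemma IsMincutBetween.mem_or_exists_adj_sideOf (h : IsMincutBetween G A B Φ) (hu : u ∈ Φ) :
    u ∈ A ∨ ∃ v, G.Adj u v ∧ v ∈ sideOf G A Φ := by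
  by_contra! hcon
  obtain ⟨huA, hnb⟩ := hcon
  refine h.2 (Φ \ {u}) Set.sdiff_subset (fun he => ((Set.ext_iff.1 he u).2 hu).2 rfl) ?_
  refine separates_iff_disjoint_sideOf.2 ((separates_iff_disjoint_sideOf.1 h.1).mono_left ?_)
  refine sideOf_subset_of_adj_closed (fun a ha => ?_) (fun x hx y hadj hy => ?_)
  · exact mem_sideOf_of_mem ha.1 fun haΦ => ha.2 ⟨haΦ, fun hau => huA (hau ▸ ha.1)⟩
  · have hyu : y ≠ u := by rintro rfl; exact hnb x hadj.symm hx
    exact mem_sideOf_of_adj (fun hyΦ => hy ⟨hyΦ, hyu⟩) hadj.symm hx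

lemma IsMincutBetween.subset_union_sideOf (hΦ : IsMincutBetween G A B Φ)
    (h : sideOf G A Φ ⊆ sideOf G A Θ) : Φ ⊆ Θ ∪ sideOf G A Θ := by
  intro u hu
  refine or_iff_not_imp_left.2 fun huΘ => ?_
  rcases hΦ.mem_or_exists_adj_sideOf hu with huA | ⟨v, hadj, hv⟩
  · exact mem_sideOf_of_mem huA huΘ
  · exact mem_sideOf_of_adj huΘ hadj (h hv)

lemma Separates.sideOf_right_subset_of_subset_union (hΘ : Separates G A B Θ)
    (h : Φ ⊆ Θ ∪ sideOf G A Θ) : sideOf G B Θ ⊆ sideOf G B Φ :=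
  sideOf_subset_sideOf_of_disjoint <| Set.disjoint_of_subset_left h <|
    Set.disjoint_union_left.2 ⟨disjoint_self_sideOf, hΘ.disjoint_sideOf⟩

lemma IsMincutBetween.sideOf_right_subset_of_sideOf_subset (hΦ : IsMincutBetween G A B Φ)
    (hΘ : Separates G A B Θ) (h : sideOf G A Φ ⊆ sideOf G A Θ) :
    sideOf G B Θ ⊆ sideOf G B Φ :=
  hΘ.sideOf_right_subset_of_subset_union (hΦ.subset_union_sideOf h)

lemma IsMincutBetween.sideOf_subset_sideOf_iff (hΦ : IsMincutBetween G A B Φ)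
    (hΘ : IsMincutBetween G A B Θ) :
    sideOf G A Φ ⊆ sideOf G A Θ ↔ sideOf G B Θ ⊆ sideOf G B Φ :=
  ⟨hΦ.sideOf_right_subset_of_sideOf_subset hΘ.1,
    hΘ.symm.sideOf_right_subset_of_sideOf_subset hΦ.1.symm⟩

lemma IsMincutBetween.sideOf_subset_of_subset_union (hΦ : Separates G A B Φ)
    (hΘ : IsMincutBetween G A B Θ) (h : Φ ⊆ Θ ∪ sideOf G A Θ) :
    sideOf G A Φ ⊆ sideOf G A Θ :=
  hΘ.symm.sideOf_right_subset_of_sideOf_subset hΦ.symm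
    (hΘ.1.sideOf_right_subset_of_subset_union h)

lemma IsMincutBetween.antisymm (hΦ : IsMincutBetween G A B Φ) (hΘ : IsMincutBetween G A B Θ)
    (hΦΘ : sideOf G A Φ ⊆ sideOf G A Θ) (hΘΦ : sideOf G A Θ ⊆ sideOf G A Φ) : Φ = Θ := by
  have key {Φ Θ : Set V} (hΦ : IsMincutBetween G A B Φ) (hΦΘ : sideOf G A Φ ⊆ sideOf G A Θ)
      (hΘΦ : sideOf G A Θ ⊆ sideOf G A Φ) : Φ ⊆ Θ := fun u hu =>
    ((hΦ.subset_union_sideOf hΦΘ) hu).resolve_right fun hu' =>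
      Set.disjoint_left.1 disjoint_self_sideOf hu (hΘΦ hu')
  exact (key hΦ hΦΘ hΘΦ).antisymm (key hΘ hΘΦ hΦΘ)

lemma exists_mincut_join [Finite V] (hΦ₁ : Φ₁ ∈ Mincut G A B) (hΦ₂ : Φ₂ ∈ Mincut G A B) :
    ∃ Ψ ∈ Mincut G A B, Ψ ⊆ Φ₁ ∪ Φ₂ ∧
      sideOf G A Φ₁ ⊆ sideOf G A Ψ ∧ sideOf G A Φ₂ ⊆ sideOf G A Ψ ∧
      ∀ Θ ∈ Mincut G A B, sideOf G A Φ₁ ⊆ sideOf G A Θ →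
        sideOf G A Φ₂ ⊆ sideOf G A Θ → sideOf G A Ψ ⊆ sideOf G A Θ := by
  set X := sideOf G A Φ₁ ∪ sideOf G A Φ₂
  have hsep : Separates G A B ((Φ₁ ∪ Φ₂) \ X) := by
    refine separates_iff_disjoint_sideOf.2 (Disjoint.mono_left ?_ (Set.disjoint_union_left.2
      ⟨separates_iff_disjoint_sideOf.1 hΦ₁.1, separates_iff_disjoint_sideOf.1 hΦ₂.1⟩))
    refine sideOf_subset_of_adj_closed (fun a ha => ?_) (fun x hx y hadj hy => ?_)
    · by_cases haF : a ∈ Φ₁ ∪ Φ₂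
      · exact not_not.1 fun haX => ha.2 ⟨haF, haX⟩
      · exact .inl (mem_sideOf_of_mem ha.1 fun haΦ₁ => haF (.inl haΦ₁))
    · by_cases hyF : y ∈ Φ₁ ∪ Φ₂
      · exact not_not.1 fun hyX => hy ⟨hyF, hyX⟩
      · rw [Set.mem_union, not_or] at hyF
        exact hx.imp (mem_sideOf_of_adj hyF.1 hadj.symm) (mem_sideOf_of_adj hyF.2 hadj.symm)
  obtain ⟨Ψ, hΨX, hΨ⟩ := exists_isMincutBetween_subset hsep
  have hdisj : Disjoint Ψ X := Set.disjoint_of_subset_left hΨX Set.disjoint_sdiff_left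
  refine ⟨Ψ, hΨ, hΨX.trans Set.sdiff_subset,
    sideOf_subset_sideOf_of_disjoint (hdisj.mono_right Set.subset_union_left),
    sideOf_subset_sideOf_of_disjoint (hdisj.mono_right Set.subset_union_right),
    fun Θ hΘ h₁ h₂ => hΘ.sideOf_subset_of_subset_union hΨ.1 ?_⟩
  exact (hΨX.trans Set.sdiff_subset).trans
    (Set.union_subset (hΦ₁.subset_union_sideOf h₁) (hΦ₂.subset_union_sideOf h₂))

lemma exists_mincut_meet [Finite V] (hΦ₁ : Φ₁ ∈ Mincut G A B) (hΦ₂ : Φ₂ ∈ Mincut G A B) :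
    ∃ Ψ ∈ Mincut G A B, Ψ ⊆ Φ₁ ∪ Φ₂ ∧
      sideOf G A Ψ ⊆ sideOf G A Φ₁ ∧ sideOf G A Ψ ⊆ sideOf G A Φ₂ ∧
      ∀ Θ ∈ Mincut G A B, sideOf G A Θ ⊆ sideOf G A Φ₁ →
        sideOf G A Θ ⊆ sideOf G A Φ₂ → sideOf G A Θ ⊆ sideOf G A Ψ := by
  rw [mincut_comm] at hΦ₁ hΦ₂ ⊢
  obtain ⟨Ψ, hΨ, hΨΦ, h₁, h₂, hleast⟩ := exists_mincut_join hΦ₁ hΦ₂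
  have hle_iff {Φ Θ : Set V} (hΦ : Φ ∈ Mincut G B A) (hΘ : Θ ∈ Mincut G B A) :=
    (IsMincutBetween.symm hΦ).sideOf_subset_sideOf_iff (IsMincutBetween.symm hΘ)
  refine ⟨Ψ, hΨ, hΨΦ, (hle_iff hΨ hΦ₁).2 h₁, (hle_iff hΨ hΦ₂).2 h₂, fun Θ hΘ hΘ₁ hΘ₂ => ?_⟩
  exact (hle_iff hΘ hΨ).2 (hleast Θ hΘ ((hle_iff hΘ hΦ₁).1 hΘ₁) ((hle_iff hΘ hΦ₂).1 hΘ₂))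

/-- Lemma `lem:latticecut`. The relation `Φ₁ ≤ Φ₂ ↔ Φ₁^A ⊆ Φ₂^A` is a partial
order on `Mincut(A,B)` (reflexive, transitive, antisymmetric), and every pair of minimal cuts has
a join and a meet in `Mincut(A,B)`, both contained in `Φ₁ ∪ Φ₂`. -/
theorem mincut_lattice {V : Type u} [Fintype V] (G : SimpleGraph V) (A B : Set V) :
    (∀ Φ ∈ Mincut G A B, sideOf G A Φ ⊆ sideOf G A Φ) ∧
    (∀ Φ₁ ∈ Mincut G A B, ∀ Φ₂ ∈ Mincut G A B, ∀ Φ₃ ∈ Mincut G A B,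
      sideOf G A Φ₁ ⊆ sideOf G A Φ₂ → sideOf G A Φ₂ ⊆ sideOf G A Φ₃ →
        sideOf G A Φ₁ ⊆ sideOf G A Φ₃) ∧
    (∀ Φ₁ ∈ Mincut G A B, ∀ Φ₂ ∈ Mincut G A B,
      sideOf G A Φ₁ ⊆ sideOf G A Φ₂ → sideOf G A Φ₂ ⊆ sideOf G A Φ₁ → Φ₁ = Φ₂) ∧
    (∀ Φ₁ ∈ Mincut G A B, ∀ Φ₂ ∈ Mincut G A B,
      ∃ Ψ ∈ Mincut G A B, Ψ ⊆ Φ₁ ∪ Φ₂ ∧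
        sideOf G A Φ₁ ⊆ sideOf G A Ψ ∧ sideOf G A Φ₂ ⊆ sideOf G A Ψ ∧
        ∀ Θ ∈ Mincut G A B, sideOf G A Φ₁ ⊆ sideOf G A Θ →
          sideOf G A Φ₂ ⊆ sideOf G A Θ → sideOf G A Ψ ⊆ sideOf G A Θ) ∧
    (∀ Φ₁ ∈ Mincut G A B, ∀ Φ₂ ∈ Mincut G A B,
      ∃ Ψ ∈ Mincut G A B, Ψ ⊆ Φ₁ ∪ Φ₂ ∧
        sideOf G A Ψ ⊆ sideOf G A Φ₁ ∧ sideOf G A Ψ ⊆ sideOf G A Φ₂ ∧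
        ∀ Θ ∈ Mincut G A B, sideOf G A Θ ⊆ sideOf G A Φ₁ →
          sideOf G A Θ ⊆ sideOf G A Φ₂ → sideOf G A Θ ⊆ sideOf G A Ψ) := by
  refine ⟨fun _ _ => subset_rfl, fun _ _ _ _ _ _ h₁₂ h₂₃ => h₁₂.trans h₂₃,
    fun _ h₁ _ h₂ => IsMincutBetween.antisymm h₁ h₂,
    fun _ h₁ _ h₂ => exists_mincut_join h₁ h₂, fun _ h₁ _ h₂ => exists_mincut_meet h₁ h₂⟩
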